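/- arXiv:0705.3391 — 2 statements merged into one kernel-verified Lean document; each statement's English description precedes it below -/
import Mathlib

section
/- Let γ1 and γ2 be positive semidefinite operators on a finite-dimensional complex inner product space H, and let {Π_k} be a common block-diagonal structure (CBS) of γ1 and γ2. Let P1 be the orthogonal projection onto ker γ1 + range γ2. Then every Π_k commutes with P1, and consequently every Π_k commutes with the reduced operators γ_μ¹ = P1 γ_μ P1 + (1 − P1) γ_μ (1 − P1) for μ = 1, 2. In other words, the reduction τ1 of unambiguous state discrimination preserves any CBS (and, by exchanging the roles of γ1 and γ2, so does τ2). -/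
/-!
`P k` commutes with `γ1` and `γ2`, so it leaves `ker γ1` and `range γ2` invariant, hence their
sum `range P1`. A self-adjoint operator leaving a subspace invariant also leaves its orthogonal
complement invariant, here `ker P1`; an operator leaving both the range and the kernel of an
idempotent invariant commutes with it. Commuting with `P1` and `γμ`, `P k` then commutes with
the reduced operators, which are polynomials in them.
-/

variable {H : Type*} [NormedAddCommGroup H] [InnerProductSpace ℂ H] [FiniteDimensional ℂ H]

/-- A positive semidefinite operator: self-adjoint with nonnegative quadratic form. -/
def IsPosSemidef (S : H →ₗ[ℂ] H) : Prop :=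
  IsSelfAdjoint S ∧ ∀ x : H, 0 ≤ (inner ℂ x (S x) : ℂ).re

namespace Module.End

variable {R M : Type*} [Semiring R] [AddCommMonoid M] [Module R M] {f g : End R M}

lemma ker_mem_invtSubmodule_of_commute (h : Commute f g) :
    LinearMap.ker g ∈ f.invtSubmodule := fun x hx => by
  simp only [Submodule.mem_comap, LinearMap.mem_ker] at hx ⊢
  rw [← mul_apply, ← h.eq, mul_apply, hx, map_zero]

lemma range_mem_invtSubmodule_of_commute (h : Commute f g) :
    LinearMap.range g ∈ f.invtSubmodule := by
  rintro _ ⟨x, rfl⟩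
  exact ⟨f x, by rw [← mul_apply, ← h.eq, mul_apply]⟩

end Module.End

lemma LinearMap.IsSymmetricProjection.commute_of_range_mem_invtSubmodule
    {𝕜 E : Type*} [RCLike 𝕜] [NormedAddCommGroup E] [InnerProductSpace 𝕜 E]
    {p T : E →ₗ[𝕜] E} (hp : p.IsSymmetricProjection) (hT : T.IsSymmetric)
    (h : LinearMap.range p ∈ Module.End.invtSubmodule T) : Commute p T := by
  refine (LinearMap.IsIdempotentElem.commute_iff hp.isIdempotentElem).mpr ⟨h, ?_⟩
  rw [← hp.isSymmetric.orthogonal_range]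
  exact hT.orthogonalComplement_mem_invtSubmodule h

lemma Commute.mul_mul_add_one_sub_mul_mul_one_sub {A : Type*} [Ring A] {a p g : A}
    (hp : Commute a p) (hg : Commute a g) :
    Commute a (p * g * p + (1 - p) * g * (1 - p)) :=
  have hp' : Commute a (1 - p) := (Commute.one_right a).sub_right hp
  ((hp.mul_right hg).mul_right hp).add_right ((hp'.mul_right hg).mul_right hp')

theorem tau1_preserves_cbs_general (γ1 γ2 : H →ₗ[ℂ] H)
    (m : ℕ) (P : Fin m → H →ₗ[ℂ] H)
    (hsa : ∀ k, IsSelfAdjoint (P k))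
    (hc1 : ∀ k, Commute (P k) γ1) (hc2 : ∀ k, Commute (P k) γ2)
    (P1 : H →ₗ[ℂ] H) (hP1sa : IsSelfAdjoint P1) (hP1idem : P1 * P1 = P1)
    (hP1range : LinearMap.range P1 = LinearMap.ker γ1 ⊔ LinearMap.range γ2) :
    ∀ k, Commute (P k) P1 ∧
      Commute (P k) (P1 * γ1 * P1 + (1 - P1) * γ1 * (1 - P1)) ∧
      Commute (P k) (P1 * γ2 * P1 + (1 - P1) * γ2 * (1 - P1)) := by
  intro k
  have hP1 : P1.IsSymmetricProjection :=
    ⟨hP1idem, (LinearMap.isSymmetric_iff_isSelfAdjoint P1).mpr hP1sa⟩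
  have hinvt : LinearMap.range P1 ∈ Module.End.invtSubmodule (P k) := hP1range ▸
    Module.End.invtSubmodule.sup_mem (Module.End.ker_mem_invtSubmodule_of_commute (hc1 k))
      (Module.End.range_mem_invtSubmodule_of_commute (hc2 k))
  have hcomm : Commute (P k) P1 := (hP1.commute_of_range_mem_invtSubmodule
    ((LinearMap.isSymmetric_iff_isSelfAdjoint _).mpr (hsa k)) hinvt).symm
  exact ⟨hcomm, hcomm.mul_mul_add_one_sub_mul_mul_one_sub (hc1 k),
    hcomm.mul_mul_add_one_sub_mul_mul_one_sub (hc2 k)⟩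

/-- The reduction `τ1` of unambiguous state discrimination preserves any common
block-diagonal structure: if `{P k}` is a CBS of the positive semidefinite operators
`γ1` and `γ2` and `P1` is the orthogonal projection onto `ker γ1 + range γ2`, then every
`P k` commutes with `P1` and with the reduced operators
`P1 * γμ * P1 + (1 - P1) * γμ * (1 - P1)`. -/
theorem tau1_preserves_cbs (γ1 γ2 : H →ₗ[ℂ] H)
    (h1 : IsPosSemidef γ1) (h2 : IsPosSemidef γ2)
    (m : ℕ) (P : Fin m → H →ₗ[ℂ] H)
    (hsa : ∀ k, IsSelfAdjoint (P k))
    (hidem : ∀ k, P k * P k = P k)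
    (horth : ∀ k l, k ≠ l → P k * P l = 0)
    (hsum : ∑ k, P k = 1)
    (hc1 : ∀ k, Commute (P k) γ1) (hc2 : ∀ k, Commute (P k) γ2)
    (P1 : H →ₗ[ℂ] H) (hP1sa : IsSelfAdjoint P1) (hP1idem : P1 * P1 = P1)
    (hP1range : LinearMap.range P1 = LinearMap.ker γ1 ⊔ LinearMap.range γ2) :
    ∀ k, Commute (P k) P1 ∧
      Commute (P k) (P1 * γ1 * P1 + (1 - P1) * γ1 * (1 - P1)) ∧
      Commute (P k) (P1 * γ2 * P1 + (1 - P1) * γ2 * (1 - P1)) :=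
  tau1_preserves_cbs_general γ1 γ2 m P hsa hc1 hc2 P1 hP1sa hP1idem hP1range
end

section
/- Let N ≥ 2 and let ψ_1, …, ψ_N be unit vectors in ℂ^d with ⟨ψ_i, ψ_j⟩ = c for all i ≠ j, where c is real with 0 < c < 1. With γ1 = N⁻² Σ_k P_k ⊗ P_k and γ2 = N⁻² Σ_{k≠l} P_k ⊗ P_l as above, the commutator [γ1, γ1 γ2² γ1] vanishes: γ1 (γ1 γ2² γ1) = (γ1 γ2² γ1) γ1. -/
/-!
Let `W` be the matrix whose columns are the product vectors `ψ k ⊗ ψ l`, `U` its submatrix of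
columns `ψ k ⊗ ψ k`, and `D` the projection onto the off-diagonal pairs `k ≠ l`. Then
`γ1 = N⁻² U Uᴴ` and `γ2 = N⁻² W D Wᴴ`, so `γ1` commutes with `γ1 M γ1` as soon as the `N × N`
matrices `Uᴴ U` and `Uᴴ M U` commute. For `M = γ2²` both are submatrices of products of `D` and
the Gram matrix `Wᴴ W = S ⊗ S`, where `S` has ones on the diagonal and `c` elsewhere. Hence both
are invariant under relabelling the states by any permutation. Invariant matrices are symmetric
(relabel by a transposition) and closed under products, so they commute: `AB = (AB)ᵀ = BᵀAᵀ = BA`.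
-/

open Matrix Kronecker

/-- The rank-one projection `ψ ψ†` onto the span of the unit vector `ψ k`. -/
noncomputable def projOf {d N : ℕ} (ψ : Fin N → Fin d → ℂ) (k : Fin N) :
    Matrix (Fin d) (Fin d) ℂ :=
  Matrix.vecMulVec (ψ k) (star (ψ k))

/-- `γ1 = N⁻² ∑ k, P k ⊗ P k`, describing a pair of identical states. -/
noncomputable def gammaOne {d N : ℕ} (ψ : Fin N → Fin d → ℂ) :
    Matrix (Fin d × Fin d) (Fin d × Fin d) ℂ :=
  ((N : ℂ) ^ 2)⁻¹ • ∑ k, projOf ψ k ⊗ₖ projOf ψ k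

/-- `γ2 = N⁻² ∑ k ≠ l, P k ⊗ P l`, describing a pair of distinct states. -/
noncomputable def gammaTwo {d N : ℕ} (ψ : Fin N → Fin d → ℂ) :
    Matrix (Fin d × Fin d) (Fin d × Fin d) ℂ :=
  ((N : ℂ) ^ 2)⁻¹ • ∑ p ∈ Finset.univ.filter (fun p : Fin N × Fin N => p.1 ≠ p.2),
    projOf ψ p.1 ⊗ₖ projOf ψ p.2

namespace Matrix

variable {n R : Type*}

theorem isSymm_of_submatrix_perm_eq [DecidableEq n] {A : Matrix n n R}
    (hA : ∀ σ : Equiv.Perm n, A.submatrix σ σ = A) : A.IsSymm :=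
  IsSymm.ext fun i j => by simpa using congr_fun₂ (hA (Equiv.swap i j)) i j

theorem commute_of_submatrix_perm_eq [DecidableEq n] [Fintype n] [CommSemiring R]
    {A B : Matrix n n R} (hA : ∀ σ : Equiv.Perm n, A.submatrix σ σ = A)
    (hB : ∀ σ : Equiv.Perm n, B.submatrix σ σ = B) : Commute A B := by
  have hAB : (A * B).IsSymm :=
    isSymm_of_submatrix_perm_eq fun σ => by rw [← submatrix_mul_equiv (e₂ := σ), hA, hB]
  calc A * B = (A * B)ᵀ := hAB.eq.symm
    _ = Bᵀ * Aᵀ := transpose_mul A B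
    _ = B * A := by
      rw [(isSymm_of_submatrix_perm_eq hA).eq, (isSymm_of_submatrix_perm_eq hB).eq]

theorem commute_mul_mul_mul_of_commute {m ι : Type*} [Fintype m] [Fintype ι] [Semiring R]
    {U : Matrix m ι R} {V : Matrix ι m R} {M : Matrix m m R}
    (h : Commute (V * U) (V * M * U)) : Commute (U * V) (U * V * M * (U * V)) :=
  calc U * V * (U * V * M * (U * V)) = U * (V * U * (V * M * U)) * V := by
        simp only [Matrix.mul_assoc]
    _ = U * (V * M * U * (V * U)) * V := by rw [h.eq]
    _ = U * V * M * (U * V) * (U * V) := by simp only [Matrix.mul_assoc]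

theorem conjTranspose_submatrix_mul_mul_submatrix {m k : Type*} [Fintype m] [Fintype k]
    [NonUnitalNonAssocSemiring R] [Star R] (W : Matrix m k R) (M : Matrix m m R) (f : n → k) :
    (W.submatrix id f)ᴴ * M * W.submatrix id f = (Wᴴ * M * W).submatrix f f :=
  rfl

def offDiagProj (n R : Type*) [DecidableEq n] [Zero R] [One R] : Matrix (n × n) (n × n) R :=
  diagonal fun p => if p.1 = p.2 then 0 else 1

theorem submatrix_diag_submatrix_perm {Z : Matrix (n × n) (n × n) R} (σ : Equiv.Perm n)
    (hZ : Z.submatrix (σ.prodCongr σ) (σ.prodCongr σ) = Z) :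
    (Z.submatrix Function.diag Function.diag).submatrix σ σ =
      Z.submatrix Function.diag Function.diag :=
  calc _ = (Z.submatrix (σ.prodCongr σ) (σ.prodCongr σ)).submatrix Function.diag Function.diag :=
        rfl
    _ = _ := by rw [hZ]

theorem commute_submatrix_diag_kronecker [DecidableEq n] [Fintype n] [CommSemiring R]
    {S : Matrix n n R} (hS : ∀ σ : Equiv.Perm n, S.submatrix σ σ = S) :
    Commute ((S ⊗ₖ S).submatrix Function.diag Function.diag)
      ((S ⊗ₖ S * offDiagProj n R * (S ⊗ₖ S) * offDiagProj n R * (S ⊗ₖ S)).submatrix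
        Function.diag Function.diag) := by
  have hK (σ : Equiv.Perm n) :
      (S ⊗ₖ S).submatrix (σ.prodCongr σ) (σ.prodCongr σ) = S ⊗ₖ S := by
    ext ⟨i, j⟩ ⟨k, l⟩
    simp only [submatrix_apply, Equiv.prodCongr_apply, Prod.map, kronecker_apply]
    rw [← congr_fun₂ (hS σ) i k, ← congr_fun₂ (hS σ) j l]
    rfl
  have hD (σ : Equiv.Perm n) :
      (offDiagProj n R).submatrix (σ.prodCongr σ) (σ.prodCongr σ) = offDiagProj n R := by
    rw [offDiagProj, submatrix_diagonal_equiv]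
    congr 1
    ext p
    simp [σ.injective.eq_iff]
  refine commute_of_submatrix_perm_eq (fun σ => submatrix_diag_submatrix_perm σ (hK σ))
    fun σ => submatrix_diag_submatrix_perm σ ?_
  simp only [← submatrix_mul_equiv (e₂ := σ.prodCongr σ), hK, hD]

end Matrix

theorem submatrix_perm_gram_of_equiangular {ι m R : Type*} [Fintype m] [DecidableEq ι]
    [NonAssocSemiring R] [Star R] {ψ : ι → m → R} {c : R}
    (hnorm : ∀ k, star (ψ k) ⬝ᵥ ψ k = 1) (hoverlap : ∀ i j, i ≠ j → star (ψ i) ⬝ᵥ ψ j = c)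
    (σ : Equiv.Perm ι) :
    ((of ψ)ᵀᴴ * (of ψ)ᵀ).submatrix σ σ = (of ψ)ᵀᴴ * (of ψ)ᵀ := by
  ext i j
  change star (ψ (σ i)) ⬝ᵥ ψ (σ j) = star (ψ i) ⬝ᵥ ψ j
  obtain rfl | hij := eq_or_ne i j
  · rw [hnorm, hnorm]
  · rw [hoverlap _ _ hij, hoverlap _ _ (σ.injective.ne hij)]

section StateComparison

variable {d N : ℕ}

theorem gammaOne_eq (ψ : Fin N → Fin d → ℂ) :
    gammaOne ψ = ((N : ℂ) ^ 2)⁻¹ •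
      (((of ψ)ᵀ ⊗ₖ (of ψ)ᵀ).submatrix id Function.diag *
        (((of ψ)ᵀ ⊗ₖ (of ψ)ᵀ).submatrix id Function.diag)ᴴ) := by
  rw [gammaOne]
  congr 1
  ext ⟨i, j⟩ ⟨i', j'⟩
  simp only [projOf, Matrix.sum_apply, kroneckerMap_apply, vecMulVec_apply, Pi.star_apply,
    conjTranspose_submatrix, mul_apply, submatrix_apply, id_eq, Function.diag_apply,
    transpose_apply, of_apply, conjTranspose_apply, star_mul']
  exact Finset.sum_congr rfl fun _ _ => by ring

theorem gammaTwo_eq (ψ : Fin N → Fin d → ℂ) :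
    gammaTwo ψ = ((N : ℂ) ^ 2)⁻¹ •
      ((of ψ)ᵀ ⊗ₖ (of ψ)ᵀ * offDiagProj (Fin N) ℂ * ((of ψ)ᵀ ⊗ₖ (of ψ)ᵀ)ᴴ) := by
  rw [gammaTwo]
  congr 1
  ext ⟨i, j⟩ ⟨i', j'⟩
  simp only [ne_eq, projOf, Matrix.sum_apply, kroneckerMap_apply, vecMulVec_apply, Pi.star_apply,
    Finset.sum_filter, ite_not, offDiagProj, mul_apply, transpose_apply, of_apply, diagonal_apply,
    mul_ite, mul_zero, mul_one, Finset.sum_ite_eq', Finset.mem_univ, if_true, conjTranspose_apply,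
    star_mul', ite_mul, zero_mul]
  refine Finset.sum_congr rfl fun _ _ => ?_
  split_ifs <;> ring

end StateComparison

theorem commutator_gamma1_g1g2sqg1_general (d N : ℕ) (ψ : Fin N → Fin d → ℂ)
    (hnorm : ∀ k, star (ψ k) ⬝ᵥ ψ k = 1)
    (c : ℝ)
    (hoverlap : ∀ i j, i ≠ j → star (ψ i) ⬝ᵥ ψ j = (c : ℂ)) :
    gammaOne ψ * (gammaOne ψ * gammaTwo ψ ^ 2 * gammaOne ψ) =
      (gammaOne ψ * gammaTwo ψ ^ 2 * gammaOne ψ) * gammaOne ψ := by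
  set W := (of ψ)ᵀ ⊗ₖ (of ψ)ᵀ
  set U := W.submatrix id Function.diag
  have hgram : Wᴴ * W = ((of ψ)ᵀᴴ * (of ψ)ᵀ) ⊗ₖ ((of ψ)ᵀᴴ * (of ψ)ᵀ) := by
    rw [conjTranspose_kronecker, mul_kronecker_mul]
  have hcomm : Commute (Uᴴ * U) (Uᴴ * (W * offDiagProj (Fin N) ℂ * Wᴴ) ^ 2 * U) := by
    have hU : Uᴴ * U = (Wᴴ * W).submatrix Function.diag Function.diag := rfl
    rw [hU, conjTranspose_submatrix_mul_mul_submatrix, hgram]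
    convert commute_submatrix_diag_kronecker
      (submatrix_perm_gram_of_equiangular hnorm hoverlap) using 2
    simp only [pow_two, Matrix.mul_assoc, ← hgram]
  have hcomm₂ : Commute (Uᴴ * U) (Uᴴ * gammaTwo ψ ^ 2 * U) := by
    rw [gammaTwo_eq, smul_pow, Matrix.mul_smul, Matrix.smul_mul]
    exact hcomm.smul_right _
  rw [gammaOne_eq]
  simp only [smul_mul_assoc, mul_smul_comm]
  rw [(commute_mul_mul_mul_of_commute hcomm₂).eq]

/-- For the state-comparison operators, the commutator `[γ1, γ1 γ2² γ1]` vanishes. -/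
theorem commutator_gamma1_g1g2sqg1 (d N : ℕ) (hN : 2 ≤ N) (ψ : Fin N → Fin d → ℂ)
    (hnorm : ∀ k, star (ψ k) ⬝ᵥ ψ k = 1)
    (c : ℝ) (hc0 : 0 < c) (hc1 : c < 1)
    (hoverlap : ∀ i j, i ≠ j → star (ψ i) ⬝ᵥ ψ j = (c : ℂ)) :
    gammaOne ψ * (gammaOne ψ * gammaTwo ψ ^ 2 * gammaOne ψ) =
      (gammaOne ψ * gammaTwo ψ ^ 2 * gammaOne ψ) * gammaOne ψ :=
  commutator_gamma1_g1g2sqg1_general d N ψ hnorm c hoverlap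
end
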